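/- arXiv:1811.06571 — 2 statements merged into one kernel-verified Lean document; each statement's English description precedes it below -/
import Mathlib

section
/- Let L_1 denote the real Banach space L^1([0,1]) with Lebesgue measure. Suppose T ∈ L(L_1), S ∈ L(L_1) is weakly compact, and ε > 0 satisfies d(T(B_{L_1}), S(B_{L_1})) < ε, where B_{L_1} is the closed unit ball of L_1. Then there exists T_1 ∈ L(L_1) such that ‖T − T_1‖ < ε and T_1(B_{L_1}) is contained in the norm closure of S(B_{L_1}). -/
open MeasureTheory Metric

noncomputable section

/-- Lebesgue measure on `[0,1]`. -/
abbrev μ01 : Measure ℝ := volume.restrict (Set.Icc 0 1)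

instance : IsProbabilityMeasure μ01 :=
  ⟨by rw [Measure.restrict_apply_univ, Real.volume_Icc]; norm_num⟩

/-- `L₁ = L¹([0,1])`. -/
abbrev L1 := Lp ℝ 1 μ01

/-- `T` is weakly compact: the closure of the image of the closed unit ball
is compact in the weak topology of the codomain. -/
def IsWeaklyCompactOp {X Y : Type*} [NormedAddCommGroup X] [NormedSpace ℝ X]
    [NormedAddCommGroup Y] [NormedSpace ℝ Y] (T : X →L[ℝ] Y) : Prop :=
  IsCompact (closure ((fun x => toWeakSpace ℝ Y (T x)) '' closedBall 0 1))

/-- The (non-symmetric) distance `d(A,B) = sup_{x ∈ A} inf_{y ∈ B} ‖x - y‖`. -/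
def setDist' {X : Type*} [NormedAddCommGroup X] (A B : Set X) : ℝ :=
  sSup ((fun x => sInf ((fun y => ‖x - y‖) '' B)) '' A)

/-!
Choose `d` with `d(T(B), S(B)) < d < ε` and, for every `h ∈ B`, a point `pick h ∈ B` with
`‖T h - S (pick h)‖ ≤ d`. For a finite measurable partition `(A_b)` of `[0,1]` (the common
fibres of finitely many simple functions) the operator `u f = ∑_b (∫_{A_b} f) • pick (h_b)`,
where `h_b = 1_{A_b} / μ(A_b)`, has norm at most `1`; and if `f` is constant on every `A_b`,
then `f = ∑_b (∫_{A_b} f) • h_b`, so `‖T f - S (u f)‖ ≤ d ‖f‖`. Since `S` is weakly compact,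
`S ∘ u` converges pointwise in the weak topology along an ultrafilter on the partitions; the
limit is the operator `T₁`. Weak lower semicontinuity of the norm and density of simple
functions give `‖T - T₁‖ ≤ d < ε`, and by Mazur's theorem weak limits of points of the convex
set `S(B)` lie in its norm closure.
-/

open Filter Set Topology

theorem exists_norm_sub_lt_of_setDist'_lt {X : Type*} [NormedAddCommGroup X] {A B : Set X}
    (hA : Bornology.IsBounded A) (hB : B.Nonempty) {r : ℝ} (h : setDist' A B < r) {x : X}
    (hx : x ∈ A) : ∃ y ∈ B, ‖x - y‖ < r := by
  obtain ⟨y₀, hy₀⟩ := id hB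
  obtain ⟨C, hC⟩ := hA.exists_norm_le
  have hbdd : ∀ x', BddBelow ((fun y => ‖x' - y‖) '' B) :=
    fun _ => ⟨0, by rintro _ ⟨y, -, rfl⟩; exact norm_nonneg _⟩
  have hinf : sInf ((fun y => ‖x - y‖) '' B) < r := by
    refine lt_of_le_of_lt (le_csSup ⟨C + ‖y₀‖, ?_⟩
      (mem_image_of_mem (fun x => sInf ((fun y => ‖x - y‖) '' B)) hx)) h
    rintro _ ⟨x', hx', rfl⟩
    exact (csInf_le (hbdd x') (mem_image_of_mem _ hy₀)).trans
      ((norm_sub_le _ _).trans (add_le_add (hC x' hx') le_rfl))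
  obtain ⟨_, ⟨y, hy, rfl⟩, hlt⟩ := exists_lt_of_csInf_lt (hB.image _) hinf
  exact ⟨y, hy, hlt⟩

section WeakLimit

variable {E : Type*} [NormedAddCommGroup E] [NormedSpace ℝ E]

theorem IsClosed.mem_of_tendsto_toWeakSpace {s : Set E} (hs : IsClosed s) (hc : Convex ℝ s)
    {ι : Type*} {l : Filter ι} [l.NeBot] {g : ι → E} {y : E}
    (h : Tendsto (fun i => toWeakSpace ℝ E (g i)) l (𝓝 (toWeakSpace ℝ E y)))
    (hg : ∀ᶠ i in l, g i ∈ s) : y ∈ s := by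
  have hws : IsClosed (toWeakSpace ℝ E '' s) := by
    rw [← hs.closure_eq, hc.toWeakSpace_closure ℝ]
    exact isClosed_closure
  exact (toWeakSpace ℝ E).injective.mem_set_image.1
    (hws.mem_of_tendsto h (hg.mono fun i hi => mem_image_of_mem _ hi))

theorem norm_le_of_tendsto_toWeakSpace {ι : Type*} {l : Filter ι} [l.NeBot] {g : ι → E} {y : E}
    {c : ℝ} (h : Tendsto (fun i => toWeakSpace ℝ E (g i)) l (𝓝 (toWeakSpace ℝ E y)))
    (hg : ∀ᶠ i in l, ‖g i‖ ≤ c) : ‖y‖ ≤ c :=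
  mem_closedBall_zero_iff.1 <| isClosed_closedBall.mem_of_tendsto_toWeakSpace
    (convex_closedBall 0 c) h (hg.mono fun _ hi => mem_closedBall_zero_iff.2 hi)

variable {X : Type*} [NormedAddCommGroup X] [NormedSpace ℝ X] {S : X →L[ℝ] E}

theorem IsWeaklyCompactOp.exists_tendsto (hS : IsWeaklyCompactOp S) {ι : Type*}
    (U : Ultrafilter ι) {v : ι → X} {r : ℝ} (hv : ∀ i, ‖v i‖ ≤ r) :
    ∃ y, Tendsto (fun i => toWeakSpace ℝ E (S (v i))) U (𝓝 (toWeakSpace ℝ E y)) := by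
  set c := |r| + 1
  have hc : 0 < c := by positivity
  have hmem : ∀ i, toWeakSpace ℝ E (S (v i)) ∈
      (c • ·) '' closure ((fun x => toWeakSpace ℝ E (S x)) '' closedBall 0 1) := by
    intro i
    refine ⟨toWeakSpace ℝ E (S (c⁻¹ • v i)), subset_closure ⟨_, ?_, rfl⟩, ?_⟩
    · rw [mem_closedBall_zero_iff, norm_smul, norm_inv, Real.norm_of_nonneg hc.le,
        inv_mul_le_one₀ hc]
      exact (hv i).trans ((le_abs_self r).trans (lt_add_one _).le)
    · simp only [map_smul, smul_inv_smul₀ hc.ne']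
  obtain ⟨z, -, hz⟩ := (hS.image (continuous_const_smul c)).ultrafilter_le_nhds'
    (U.map fun i => toWeakSpace ℝ E (S (v i))) (mem_map.2 (univ_mem' hmem))
  exact ⟨(toWeakSpace ℝ E).symm z, by rwa [LinearEquiv.apply_symm_apply]⟩

theorem IsWeaklyCompactOp.exists_clm_tendsto (hS : IsWeaklyCompactOp S) {ι : Type*}
    (U : Ultrafilter ι) (u : ι → X →L[ℝ] X) (hu : ∀ i, ‖u i‖ ≤ 1) :
    ∃ R : X →L[ℝ] E, ∀ x,
      Tendsto (fun i => toWeakSpace ℝ E (S (u i x))) U (𝓝 (toWeakSpace ℝ E (R x))) := by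
  have hbound : ∀ x i, ‖u i x‖ ≤ ‖x‖ := fun x i =>
    ((u i).le_opNorm x).trans (mul_le_of_le_one_left (norm_nonneg x) (hu i))
  choose R hR using fun x => hS.exists_tendsto U (hbound x)
  have hR_unique : ∀ x y,
      Tendsto (fun i => toWeakSpace ℝ E (S (u i x))) U (𝓝 (toWeakSpace ℝ E y)) → R x = y :=
    fun x y h => (toWeakSpace ℝ E).injective (tendsto_nhds_unique (hR x) h)
  let Rₗ : X →ₗ[ℝ] E :=
    { toFun := R
      map_add' := fun x y => hR_unique _ _ (by simpa using (hR x).add (hR y))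
      map_smul' := fun a x => hR_unique _ _ (by simpa using (hR x).const_smul a) }
  refine ⟨Rₗ.mkContinuous ‖S‖ fun x => ?_, hR⟩
  exact norm_le_of_tendsto_toWeakSpace (hR x) (Eventually.of_forall fun i =>
    (S.le_opNorm _).trans (mul_le_mul_of_nonneg_left (hbound x i) (norm_nonneg _)))

theorem image_closedBall_subset_closure_of_tendsto {ι : Type*} (l : Filter ι) [l.NeBot]
    {u : ι → X →L[ℝ] X} (hu : ∀ i, ‖u i‖ ≤ 1) {R : X →L[ℝ] E}
    (hR : ∀ x, Tendsto (fun i => toWeakSpace ℝ E (S (u i x))) l (𝓝 (toWeakSpace ℝ E (R x)))) :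
    R '' closedBall 0 1 ⊆ closure (S '' closedBall 0 1) := by
  rintro _ ⟨x, hx, rfl⟩
  refine isClosed_closure.mem_of_tendsto_toWeakSpace
    ((convex_closedBall 0 1).linear_image S.toLinearMap).closure (hR x)
    (Eventually.of_forall fun i => subset_closure ⟨u i x, ?_, rfl⟩)
  rw [mem_closedBall_zero_iff] at hx ⊢
  exact ((u i).le_opNorm x).trans (mul_le_one₀ (hu i) (norm_nonneg x) hx)

end WeakLimit

namespace MeasureTheory

variable {α β : Type*} [MeasurableSpace α]
  {E F : Type*} [NormedAddCommGroup E] [NormedSpace ℝ E] [NormedAddCommGroup F] [NormedSpace ℝ F]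

def SimpleFunc.pi {ι : Type*} [Finite ι] (f : ι → SimpleFunc α β) : SimpleFunc α (ι → β) where
  toFun x i := f i x
  measurableSet_fiber' v := by
    have hfiber : (fun x i => f i x) ⁻¹' {v} = ⋂ i, f i ⁻¹' {v i} := by
      ext x
      simp [funext_iff]
    rw [hfiber]
    exact MeasurableSet.iInter fun i => (f i).measurableSet_fiber _
  finite_range' := (Set.Finite.pi fun i => (f i).finite_range).subset <| by
    rintro _ ⟨x, rfl⟩
    simp

section FiberwiseIntegral

variable (μ : Measure α)

def L1.setIntegralCLM (s : Set α) : (α →₁[μ] ℝ) →L[ℝ] ℝ :=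
  L1.integralCLM.comp (LpToLpRestrictCLM α ℝ ℝ μ 1 s)

theorem L1.setIntegralCLM_apply (s : Set α) (f : α →₁[μ] ℝ) :
    setIntegralCLM μ s f = ∫ x in s, f x ∂μ := by
  rw [setIntegralCLM, ContinuousLinearMap.comp_apply, ← L1.integral_eq, L1.integral_eq_integral,
    integral_congr_ae (LpToLpRestrictCLM_coeFn ℝ s f)]

def SimpleFunc.fiberwiseIntegralCLM (Φ : SimpleFunc α β) (w : β → E) : (α →₁[μ] ℝ) →L[ℝ] E :=
  ∑ b ∈ Φ.range, (L1.setIntegralCLM μ (Φ ⁻¹' {b})).smulRight (w b)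

variable {μ}

namespace SimpleFunc

theorem fiberwiseIntegralCLM_apply (Φ : SimpleFunc α β) (w : β → E) (f : α →₁[μ] ℝ) :
    Φ.fiberwiseIntegralCLM μ w f = ∑ b ∈ Φ.range, (∫ x in Φ ⁻¹' {b}, f x ∂μ) • w b := by
  simp [fiberwiseIntegralCLM, L1.setIntegralCLM_apply]

theorem sum_abs_setIntegral_fiber_le (Φ : SimpleFunc α β) (f : α →₁[μ] ℝ) :
    ∑ b ∈ Φ.range, |∫ x in Φ ⁻¹' {b}, f x ∂μ| ≤ ‖f‖ := by
  have hint : Integrable (fun x => |f x|) μ := (L1.integrable_coeFn f).abs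
  have hcover : ⋃ b ∈ Φ.range, Φ ⁻¹' {b} = univ := by ext x; simp
  calc ∑ b ∈ Φ.range, |∫ x in Φ ⁻¹' {b}, f x ∂μ|
      ≤ ∑ b ∈ Φ.range, ∫ x in Φ ⁻¹' {b}, |f x| ∂μ :=
        Finset.sum_le_sum fun b _ => abs_integral_le_integral_abs
    _ = ∫ x in ⋃ b ∈ Φ.range, Φ ⁻¹' {b}, |f x| ∂μ :=
        (integral_biUnion_finset _ (fun b _ => Φ.measurableSet_fiber b)
          (fun _ _ _ _ hbc => (disjoint_singleton.2 hbc).preimage Φ)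
          fun _ _ => hint.integrableOn).symm
    _ = ‖f‖ := by
        rw [hcover, Measure.restrict_univ, L1.norm_eq_integral_norm]
        rfl

theorem norm_fiberwiseIntegralCLM_apply_le (Φ : SimpleFunc α β) {w : β → E} {C : ℝ}
    (hC : 0 ≤ C) (hw : ∀ b, ‖w b‖ ≤ C) (f : α →₁[μ] ℝ) :
    ‖Φ.fiberwiseIntegralCLM μ w f‖ ≤ C * ‖f‖ := by
  rw [fiberwiseIntegralCLM_apply]
  calc ‖∑ b ∈ Φ.range, (∫ x in Φ ⁻¹' {b}, f x ∂μ) • w b‖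
      ≤ ∑ b ∈ Φ.range, |∫ x in Φ ⁻¹' {b}, f x ∂μ| * C := by
        refine (norm_sum_le _ _).trans (Finset.sum_le_sum fun b _ => ?_)
        rw [norm_smul, Real.norm_eq_abs]
        exact mul_le_mul_of_nonneg_left (hw b) (abs_nonneg _)
    _ ≤ C * ‖f‖ := by
        rw [← Finset.sum_mul, mul_comm]
        exact mul_le_mul_of_nonneg_left (sum_abs_setIntegral_fiber_le Φ f) hC

theorem map_fiberwiseIntegralCLM_apply (Φ : SimpleFunc α β) (w : β → E) (L : E →L[ℝ] F)
    (f : α →₁[μ] ℝ) : L (Φ.fiberwiseIntegralCLM μ w f) = Φ.fiberwiseIntegralCLM μ (L ∘ w) f := by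
  simp [fiberwiseIntegralCLM_apply]

theorem fiberwiseIntegralCLM_sub (Φ : SimpleFunc α β) (w₁ w₂ : β → E) :
    Φ.fiberwiseIntegralCLM μ (w₁ - w₂) =
      Φ.fiberwiseIntegralCLM μ w₁ - Φ.fiberwiseIntegralCLM μ w₂ := by
  refine ContinuousLinearMap.ext fun f => ?_
  simp [fiberwiseIntegralCLM_apply, smul_sub]

end SimpleFunc

end FiberwiseIntegral

section NormalizedIndicator

variable (μ : Measure α) [IsFiniteMeasure μ]

def L1.normalizedIndicator {s : Set α} (hs : MeasurableSet s) : α →₁[μ] ℝ :=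
  (μ.real s)⁻¹ • indicatorConstLp 1 hs (measure_ne_top μ s) 1

variable {μ}

theorem L1.norm_indicatorConstLp_one {s : Set α} (hs : MeasurableSet s) :
    ‖indicatorConstLp 1 hs (measure_ne_top μ s) (1 : ℝ)‖ = μ.real s := by
  simp [norm_indicatorConstLp one_ne_zero ENNReal.one_ne_top]

theorem L1.norm_normalizedIndicator_le {s : Set α} (hs : MeasurableSet s) :
    ‖normalizedIndicator μ hs‖ ≤ 1 := by
  rw [normalizedIndicator, norm_smul, norm_indicatorConstLp_one, norm_inv,
    Real.norm_of_nonneg measureReal_nonneg]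
  exact inv_mul_le_one

-- On a null set the indicator is already `0` in `L¹`, so the junk value `0⁻¹ = 0` does no harm.
theorem L1.measureReal_smul_normalizedIndicator {s : Set α} (hs : MeasurableSet s) :
    μ.real s • normalizedIndicator μ hs = indicatorConstLp 1 hs (measure_ne_top μ s) 1 := by
  rcases eq_or_ne (μ.real s) 0 with h | h
  · rw [h, zero_smul, eq_comm, ← norm_eq_zero, norm_indicatorConstLp_one, h]
  · rw [normalizedIndicator, smul_inv_smul₀ h]

namespace SimpleFunc

theorem fiberwiseIntegralCLM_normalizedIndicator (Φ : SimpleFunc α β) {g : β → ℝ}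
    {f : α →₁[μ] ℝ} (hf : f =ᵐ[μ] g ∘ Φ) :
    Φ.fiberwiseIntegralCLM μ (fun b => L1.normalizedIndicator μ (Φ.measurableSet_fiber b)) f =
      f := by
  set χ := fun b => indicatorConstLp 1 (Φ.measurableSet_fiber b) (measure_ne_top μ _) (1 : ℝ)
  have hfiber : ∀ b, (∫ x in Φ ⁻¹' {b}, f x ∂μ) •
      L1.normalizedIndicator μ (Φ.measurableSet_fiber b) = g b • χ b := by
    intro b
    have hint : ∫ x in Φ ⁻¹' {b}, f x ∂μ = g b * μ.real (Φ ⁻¹' {b}) := by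
      rw [setIntegral_congr_ae (Φ.measurableSet_fiber b)
        (hf.mono fun x hx hxb => hx.trans (congrArg g hxb)), setIntegral_const, smul_eq_mul,
        mul_comm]
    rw [hint, mul_smul, L1.measureReal_smul_normalizedIndicator]
  have hχ : ∀ᵐ x ∂μ, ∀ b ∈ Φ.range, (g b • χ b) x = g b * (Φ ⁻¹' {b}).indicator 1 x := by
    refine (eventually_all_finset _).2 fun b _ => ?_
    filter_upwards [Lp.coeFn_smul (g b) (χ b), indicatorConstLp_coeFn (p := 1)
      (hs := Φ.measurableSet_fiber b) (hμs := measure_ne_top μ _) (c := (1 : ℝ))] with x h1 h2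
    rw [h1, Pi.smul_apply, h2, smul_eq_mul]
    rfl
  rw [fiberwiseIntegralCLM_apply, Finset.sum_congr rfl fun b _ => hfiber b]
  refine Lp.ext ?_
  filter_upwards [Lp.coeFn_fun_finsetSum Φ.range fun b => g b • χ b, hχ, hf]
    with x hsum hχx hfx
  rw [hsum, Finset.sum_congr rfl hχx, hfx, Finset.sum_eq_single_of_mem (Φ x) (Φ.mem_range_self x)
    fun b _ hb => by simp [Ne.symm hb]]
  simp

theorem norm_sub_fiberwiseIntegralCLM_le {X Y : Type*} [NormedAddCommGroup X] [NormedSpace ℝ X]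
    [NormedAddCommGroup Y] [NormedSpace ℝ Y] (Φ : SimpleFunc α β) {T : (α →₁[μ] ℝ) →L[ℝ] Y}
    {S : X →L[ℝ] Y} {v : β → X} {c : ℝ} (hc : 0 ≤ c)
    (hv : ∀ b, ‖T (L1.normalizedIndicator μ (Φ.measurableSet_fiber b)) - S (v b)‖ ≤ c)
    {g : β → ℝ} {f : α →₁[μ] ℝ} (hf : f =ᵐ[μ] g ∘ Φ) :
    ‖T f - S (Φ.fiberwiseIntegralCLM μ v f)‖ ≤ c * ‖f‖ := by
  set h := fun b => L1.normalizedIndicator μ (Φ.measurableSet_fiber b)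
  calc ‖T f - S (Φ.fiberwiseIntegralCLM μ v f)‖
      = ‖Φ.fiberwiseIntegralCLM μ (T ∘ h - S ∘ v) f‖ := by
        rw [fiberwiseIntegralCLM_sub, FunLike.coe_sub, Pi.sub_apply,
          ← map_fiberwiseIntegralCLM_apply Φ h T, ← map_fiberwiseIntegralCLM_apply Φ v S,
          fiberwiseIntegralCLM_normalizedIndicator Φ hf]
    _ ≤ c * ‖f‖ := norm_fiberwiseIntegralCLM_apply_le Φ hc hv f

end SimpleFunc

end NormalizedIndicator

end MeasureTheory

section L1Approximation

open MeasureTheory SimpleFunc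

variable {α : Type*} [MeasurableSpace α] {μ : Measure α} [IsFiniteMeasure μ]
  {Y : Type*} [NormedAddCommGroup Y] [NormedSpace ℝ Y]

theorem IsWeaklyCompactOp.exists_opNorm_sub_le_of_forall_near {S T : (α →₁[μ] ℝ) →L[ℝ] Y}
    (hS : IsWeaklyCompactOp S) {c : ℝ}
    (hnear : ∀ h ∈ closedBall (0 : α →₁[μ] ℝ) 1, ∃ x ∈ closedBall (0 : α →₁[μ] ℝ) 1,
      ‖T h - S x‖ ≤ c) :
    ∃ R : (α →₁[μ] ℝ) →L[ℝ] Y,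
      ‖T - R‖ ≤ c ∧ R '' closedBall 0 1 ⊆ closure (S '' closedBall 0 1) := by
  classical
  have hc : 0 ≤ c := by
    obtain ⟨x, -, hx⟩ := hnear 0 (mem_closedBall_self zero_le_one)
    exact (norm_nonneg _).trans hx
  choose! pick hpick_mem hpick using hnear
  let Φ (F : Finset (SimpleFunc α ℝ)) : SimpleFunc α (F → ℝ) := SimpleFunc.pi fun g : F => g.1
  let h (F : Finset (SimpleFunc α ℝ)) (b : F → ℝ) :=
    L1.normalizedIndicator μ ((Φ F).measurableSet_fiber b)
  have hh : ∀ F b, h F b ∈ closedBall 0 1 := fun F b =>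
    mem_closedBall_zero_iff.2 (L1.norm_normalizedIndicator_le _)
  let u (F : Finset (SimpleFunc α ℝ)) := (Φ F).fiberwiseIntegralCLM μ fun b => pick (h F b)
  have hu : ∀ F, ‖u F‖ ≤ 1 := fun F => ContinuousLinearMap.opNorm_le_bound _ zero_le_one <|
    norm_fiberwiseIntegralCLM_apply_le _ zero_le_one fun b =>
      mem_closedBall_zero_iff.1 (hpick_mem _ (hh F b))
  -- Along an ultrafilter finer than `atTop`, each simple function `g` eventually lies in `F`,
  -- hence is a function of `Φ F`.
  let U := Ultrafilter.of (atTop : Filter (Finset (SimpleFunc α ℝ)))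
  obtain ⟨R, hR⟩ := hS.exists_clm_tendsto U u hu
  have hsimple : ∀ (g : SimpleFunc α ℝ) (f : α →₁[μ] ℝ), f =ᵐ[μ] g →
      ‖(T - R) f‖ ≤ c * ‖f‖ := by
    intro g f hfg
    refine norm_le_of_tendsto_toWeakSpace (g := fun F => T f - S (u F f))
      (by simpa using tendsto_const_nhds.sub (hR f)) ?_
    filter_upwards [Ultrafilter.of_le atTop (eventually_ge_atTop {g})] with F hF
    exact norm_sub_fiberwiseIntegralCLM_le (Φ F) hc (fun b => hpick _ (hh F b))
      (g := fun v => v ⟨g, hF (Finset.mem_singleton_self g)⟩) hfg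
  refine ⟨R, ContinuousLinearMap.opNorm_le_bound _ hc fun f => ?_, ?_⟩
  · refine (Lp.simpleFunc.denseRange ENNReal.one_ne_top).induction_on f
      (isClosed_le (by fun_prop) (by fun_prop)) fun s => ?_
    exact hsimple _ _ (Lp.simpleFunc.toSimpleFunc_eq_toFun s).symm
  · exact image_closedBall_subset_closure_of_tendsto U hu hR

end L1Approximation

theorem approx_by_operator_into_closure_of_image_general
    (T S : L1 →L[ℝ] L1) (hS : IsWeaklyCompactOp S) (ε : ℝ)
    (hd : setDist' (⇑T '' closedBall 0 1) (⇑S '' closedBall 0 1) < ε) :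
    ∃ T₁ : L1 →L[ℝ] L1, ‖T - T₁‖ < ε ∧
      ⇑T₁ '' closedBall 0 1 ⊆ closure (⇑S '' closedBall 0 1) := by
  obtain ⟨d, hd, hdε⟩ := exists_between hd
  have hnear : ∀ h ∈ closedBall (0 : L1) 1, ∃ x ∈ closedBall (0 : L1) 1, ‖T h - S x‖ ≤ d := by
    intro h hh
    obtain ⟨_, ⟨x, hx, rfl⟩, hlt⟩ := exists_norm_sub_lt_of_setDist'_lt
      (T.lipschitz.isBounded_image isBounded_closedBall)
      ((nonempty_closedBall.2 zero_le_one).image S) hd (mem_image_of_mem T hh)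
    exact ⟨x, hx, hlt.le⟩
  obtain ⟨T₁, hT₁, hmaps⟩ := hS.exists_opNorm_sub_le_of_forall_near hnear
  exact ⟨T₁, hT₁.trans_lt hdε, hmaps⟩

/-- **First step of the proposition.** If `T, S ∈ L(L₁)` with `S` weakly compact and
`ε > 0` satisfies `d(T(B_{L₁}), S(B_{L₁})) < ε`, then there is `T₁ ∈ L(L₁)` with
`‖T - T₁‖ < ε` and `T₁(B_{L₁})` contained in the norm closure of `S(B_{L₁})`. -/
theorem approx_by_operator_into_closure_of_image
    (T S : L1 →L[ℝ] L1) (hS : IsWeaklyCompactOp S) (ε : ℝ) (hε : 0 < ε)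
    (hd : setDist' (⇑T '' closedBall 0 1) (⇑S '' closedBall 0 1) < ε) :
    ∃ T₁ : L1 →L[ℝ] L1, ‖T - T₁‖ < ε ∧
      ⇑T₁ '' closedBall 0 1 ⊆ closure (⇑S '' closedBall 0 1) :=
  approx_by_operator_into_closure_of_image_general T S hS ε hd
end
end

section
/- For every real number p with 2 ≤ p < ∞ there exists a constant D_p > 0 with the following property: for every probability space (Ω, μ), every finite sequence f_1, …, f_n of independent real random variables on Ω with ∫ f_k dμ = 0 and f_k ∈ L^p(μ) for each k, and all real scalars a_1, …, a_n, one has ‖∑_{k=1}^n a_k f_k‖_{L^p(μ)} ≤ D_p · (∑_{k=1}^n a_k^2 · ‖f_k‖_{L^p(μ)}^2)^{1/2}. -/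
/-!
For `p ≥ 2` and `C = 2 (p + 1) ^ p` one has the second-order bound
`|x + y| ^ p ≤ |x| ^ p + p |x| ^ (p - 2) x y + C (|x| ^ (p - 2) y ^ 2 + |y| ^ p)`:
when `p |y| ≤ |x|` it follows from `(1 + u) ^ p ≤ exp (p u) ≤ 1 + p u + (p u) ^ 2`, and
otherwise every term is dominated by `|y| ^ p`.
If `Y` is independent of `X` and has mean zero, the linear term integrates to zero and the
cross term factorises, so `‖X + Y‖ₚᵖ ≤ ‖X‖ₚᵖ + C (‖X‖ₚ^(p-2) ‖Y‖ₚ² + ‖Y‖ₚᵖ)`, because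
`‖·‖ᵣ ≤ ‖·‖ₚ` for `r ≤ p` on a probability space. Adding the summands one at a time, this
recursion preserves `‖S‖ₚ² ≤ 2 C ∑ ‖fₖ‖ₚ²` thanks to the elementary inequality
`u ^ q + (u + v) ^ (q - 1) v ≤ (u + v) ^ q` for `q = p / 2 ≥ 1`.
-/

open MeasureTheory ProbabilityTheory

namespace Real

lemma rpow_sub_one_mul_self {x : ℝ} (hx : 0 ≤ x) {p : ℝ} (hp : p ≠ 0) :
    x ^ (p - 1) * x = x ^ p := by
  rw [← rpow_add_one' hx (by simpa using hp), sub_add_cancel]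

lemma rpow_sub_two_mul_sq {x : ℝ} (hx : 0 ≤ x) {p : ℝ} (hp : p ≠ 0) :
    x ^ (p - 2) * x ^ 2 = x ^ p := by
  rw [← rpow_natCast, ← rpow_add' hx (by simpa using hp)]; norm_num

lemma one_add_rpow_le {p u : ℝ} (hp : 0 ≤ p) (hu : -1 ≤ u) (hpu : |p * u| ≤ 1) :
    (1 + u) ^ p ≤ 1 + p * u + (p * u) ^ 2 :=
  calc (1 + u) ^ p ≤ exp u ^ p :=
        rpow_le_rpow (by linarith) (by linarith [add_one_le_exp u]) hp
    _ = exp (p * u) := by rw [mul_comm, exp_mul]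
    _ ≤ 1 + p * u + (p * u) ^ 2 := by
        linarith [(abs_le.1 (abs_exp_sub_one_sub_id_le hpu)).2]

lemma abs_add_rpow_le_of_mul_abs_le {p x y : ℝ} (hp : 1 ≤ p) (hx : 0 < x)
    (hy : p * |y| ≤ x) :
    |x + y| ^ p ≤ x ^ p + p * x ^ (p - 1) * y + p ^ 2 * x ^ (p - 2) * y ^ 2 := by
  set u := y / x
  have hu : |u| ≤ 1 / p := by
    rw [abs_div, abs_of_pos hx, div_le_div_iff₀ hx (by positivity)]; linarith
  have hpu : |p * u| ≤ 1 := by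
    rw [abs_mul, abs_of_pos (by positivity)]
    calc p * |u| ≤ p * (1 / p) := by gcongr
      _ = 1 := by field_simp
  have hu1 : -1 ≤ u := by
    have : 1 / p ≤ 1 := by rw [div_le_one (by positivity)]; exact hp
    linarith [neg_abs_le u]
  have hxy : x + y = x * (1 + u) := by simp only [u]; field_simp
  have hxp : x ^ p = x ^ (p - 1) * x := (rpow_sub_one_mul_self hx.le (by positivity)).symm
  have hxp' : x ^ p = x ^ (p - 2) * x ^ 2 := (rpow_sub_two_mul_sq hx.le (by positivity)).symm
  calc |x + y| ^ p = x ^ p * (1 + u) ^ p := by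
        rw [hxy, abs_of_nonneg (by nlinarith), mul_rpow hx.le (by linarith)]
    _ ≤ x ^ p * (1 + p * u + (p * u) ^ 2) := by
        gcongr; exact one_add_rpow_le (by linarith) hu1 hpu
    _ = x ^ p + p * x ^ (p - 1) * y + p ^ 2 * x ^ (p - 2) * y ^ 2 := by
        have e1 : x ^ p * u = x ^ (p - 1) * y := by simp only [u]; rw [hxp]; field_simp
        have e2 : x ^ p * u ^ 2 = x ^ (p - 2) * y ^ 2 := by simp only [u]; rw [hxp']; field_simp
        linear_combination p * e1 + p ^ 2 * e2

lemma abs_add_rpow_le_of_le_mul_abs {p x y : ℝ} (hp : 1 ≤ p) (hx : 0 ≤ x)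
    (hy : x ≤ p * |y|) :
    |x + y| ^ p ≤ x ^ p + p * x ^ (p - 1) * y + 2 * (p + 1) ^ p * |y| ^ p := by
  have hp0 : p ≠ 0 := by positivity
  have hsum : |x + y| ^ p ≤ (p + 1) ^ p * |y| ^ p := by
    rw [← mul_rpow (by positivity) (abs_nonneg y)]
    gcongr
    linarith [abs_add_le x y, abs_of_nonneg hx]
  have hlin : -(p * x ^ (p - 1) * y) ≤ (p + 1) ^ p * |y| ^ p :=
    calc -(p * x ^ (p - 1) * y) ≤ p * x ^ (p - 1) * |y| := by
          rw [← mul_neg]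
          gcongr
          exact neg_le_abs y
      _ ≤ p * (p * |y|) ^ (p - 1) * |y| := by gcongr
      _ = (p * |y|) ^ (p - 1) * (p * |y|) := by ring
      _ = p ^ p * |y| ^ p := by
          rw [rpow_sub_one_mul_self (by positivity) hp0, mul_rpow (by positivity) (abs_nonneg y)]
      _ ≤ (p + 1) ^ p * |y| ^ p := by gcongr; linarith
  have : 0 ≤ x ^ p := by positivity
  linarith

lemma abs_add_rpow_le_of_nonneg {p x : ℝ} (y : ℝ) (hp : 2 ≤ p) (hx : 0 ≤ x) :
    |x + y| ^ p ≤ x ^ p + p * (x ^ (p - 2) * x) * y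
      + 2 * (p + 1) ^ p * (x ^ (p - 2) * y ^ 2 + |y| ^ p) := by
  have hx1 : x ^ (p - 2) * x = x ^ (p - 1) := by
    rw [← rpow_add_one' hx (by linarith)]; ring_nf
  have hC : 1 ≤ (p + 1) ^ p := one_le_rpow (by linarith) (by linarith)
  have hy : 0 ≤ |y| ^ p := by positivity
  rw [hx1]
  rcases le_or_gt x (p * |y|) with hlarge | hsmall
  · have := abs_add_rpow_le_of_le_mul_abs (by linarith) hx hlarge
    have : 0 ≤ x ^ (p - 2) * y ^ 2 := by positivity
    nlinarith
  · have hx : 0 < x := (by positivity : 0 ≤ p * |y|).trans_lt hsmall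
    have := abs_add_rpow_le_of_mul_abs_le (by linarith) hx hsmall.le
    have hp2 : p ^ 2 ≤ 2 * (p + 1) ^ p :=
      calc p ^ 2 ≤ (p + 1) ^ (2 : ℝ) := by rw [rpow_two]; gcongr; linarith
        _ ≤ (p + 1) ^ p := rpow_le_rpow_of_exponent_le (by linarith) hp
        _ ≤ 2 * (p + 1) ^ p := by linarith
    have : 0 ≤ x ^ (p - 2) * y ^ 2 := by positivity
    nlinarith

lemma abs_add_rpow_le {p : ℝ} (hp : 2 ≤ p) (x y : ℝ) :
    |x + y| ^ p ≤ |x| ^ p + p * (|x| ^ (p - 2) * x) * y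
      + 2 * (p + 1) ^ p * (|x| ^ (p - 2) * y ^ 2 + |y| ^ p) := by
  rcases le_or_gt 0 x with hx | hx
  · simpa only [abs_of_nonneg hx] using abs_add_rpow_le_of_nonneg y hp hx
  · have := abs_add_rpow_le_of_nonneg (-y) hp (neg_nonneg.2 hx.le)
    rw [← neg_add, abs_neg, abs_neg, neg_sq, ← abs_of_neg hx] at this
    convert this using 3
    rw [abs_of_neg hx]; ring

lemma rpow_add_rpow_sub_one_mul_le {q u v : ℝ} (hq : 1 ≤ q) (hu : 0 ≤ u) (hv : 0 ≤ v) :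
    u ^ q + (u + v) ^ (q - 1) * v ≤ (u + v) ^ q :=
  calc u ^ q + (u + v) ^ (q - 1) * v = u ^ (q - 1) * u + (u + v) ^ (q - 1) * v := by
        rw [rpow_sub_one_mul_self hu (by positivity)]
    _ ≤ (u + v) ^ (q - 1) * u + (u + v) ^ (q - 1) * v := by
        gcongr
        linarith
    _ = (u + v) ^ q := by rw [← mul_add, rpow_sub_one_mul_self (by positivity) (by positivity)]

lemma rpow_add_mul_le {q c a b W : ℝ} (hq : 1 ≤ q) (hc : 1 ≤ 2 * c) (ha : 0 ≤ a)
    (hb : 0 ≤ b) (haW : a ≤ W) :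
    a ^ q + c * (a ^ (q - 1) * b + b ^ q) ≤ (W + 2 * c * b) ^ q := by
  set V := 2 * c * b
  have hV : b ≤ V := by nlinarith
  have hW : 0 ≤ W := ha.trans haW
  have h1 : a ^ q ≤ W ^ q := by gcongr
  have h2 : a ^ (q - 1) ≤ (W + V) ^ (q - 1) := by gcongr; linarith
  have h3 : b ^ q ≤ (W + V) ^ (q - 1) * b := by
    rw [← rpow_sub_one_mul_self hb (by positivity)]
    gcongr; linarith
  have h4 := rpow_add_rpow_sub_one_mul_le hq hW (hb.trans hV)
  have h5 : c * (a ^ (q - 1) * b + b ^ q) ≤ (W + V) ^ (q - 1) * V :=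
    calc c * (a ^ (q - 1) * b + b ^ q) ≤ c * ((W + V) ^ (q - 1) * b + (W + V) ^ (q - 1) * b) :=
          mul_le_mul_of_nonneg_left (add_le_add (mul_le_mul_of_nonneg_right h2 hb) h3)
            (by linarith)
      _ = (W + V) ^ (q - 1) * V := by ring
  linarith

lemma sq_rpow_div_two {x : ℝ} (hx : 0 ≤ x) (r : ℝ) : (x ^ 2) ^ (r / 2) = x ^ r := by
  rw [← rpow_natCast_mul hx, Nat.cast_ofNat, mul_div_cancel₀ r two_ne_zero]

end Real

section

variable {Ω : Type*} [MeasurableSpace Ω] {μ : Measure Ω} {p r : ℝ} {g : Ω → ℝ}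

lemma integral_abs_rpow_eq_lpNorm_rpow (hr : 0 < r) (hg : AEStronglyMeasurable g μ) :
    ∫ ω, |g ω| ^ r ∂μ = lpNorm g (ENNReal.ofReal r) μ ^ r := by
  rw [lpNorm_eq_integral_norm_rpow_toReal (by simpa using hr) ENNReal.ofReal_ne_top hg,
    ENNReal.toReal_ofReal hr.le, Real.rpow_inv_rpow (by positivity) hr.ne']
  simp only [Real.norm_eq_abs]

lemma lpNorm_le_lpNorm_of_exponent_le [IsProbabilityMeasure μ] {E : Type*}
    [NormedAddCommGroup E] {s t : ENNReal} (hst : s ≤ t) {f : Ω → E} (hf : MemLp f t μ) :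
    lpNorm f s μ ≤ lpNorm f t μ := by
  rw [← toReal_eLpNorm hf.1, ← toReal_eLpNorm hf.1]
  exact ENNReal.toReal_mono hf.eLpNorm_ne_top (eLpNorm_le_eLpNorm_of_exponent_le hst hf.1)

lemma MeasureTheory.MemLp.integrable_abs_rpow [IsFiniteMeasure μ]
    (hg : MemLp g (ENNReal.ofReal p) μ) (hr : 0 ≤ r) (hrp : r ≤ p) :
    Integrable (fun ω => |g ω| ^ r) μ := by
  simpa [ENNReal.toReal_ofReal hr] using
    (hg.mono_exponent (ENNReal.ofReal_le_ofReal hrp)).integrable_norm_rpow'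

lemma integral_abs_rpow_le_lpNorm_rpow [IsProbabilityMeasure μ]
    (hg : MemLp g (ENNReal.ofReal p) μ) (hr : 0 ≤ r) (hrp : r ≤ p) :
    ∫ ω, |g ω| ^ r ∂μ ≤ lpNorm g (ENNReal.ofReal p) μ ^ r := by
  rcases hr.eq_or_lt with rfl | hr
  · simp
  rw [integral_abs_rpow_eq_lpNorm_rpow hr hg.1]
  exact Real.rpow_le_rpow lpNorm_nonneg
    (lpNorm_le_lpNorm_of_exponent_le (ENNReal.ofReal_le_ofReal hrp) hg) hr.le

lemma integral_abs_add_rpow_le [IsProbabilityMeasure μ] (hp : 2 ≤ p) {X Y : Ω → ℝ}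
    (hXY : IndepFun X Y μ) (hY0 : μ[Y] = 0)
    (hX : MemLp X (ENNReal.ofReal p) μ) (hY : MemLp Y (ENNReal.ofReal p) μ) :
    ∫ ω, |X ω + Y ω| ^ p ∂μ ≤ ∫ ω, |X ω| ^ p ∂μ + 2 * (p + 1) ^ p *
      ((∫ ω, |X ω| ^ (p - 2) ∂μ) * (∫ ω, Y ω ^ 2 ∂μ) + ∫ ω, |Y ω| ^ p ∂μ) := by
  have iX := hX.integrable_abs_rpow (by linarith) le_rfl
  have iY := hY.integrable_abs_rpow (by linarith) le_rfl
  have iXY := (hX.add hY).integrable_abs_rpow (by linarith) le_rfl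
  have iX2 := hX.integrable_abs_rpow (r := p - 2) (by linarith) (by linarith)
  have iY2 : Integrable (fun ω => Y ω ^ 2) μ := by
    simpa [Real.rpow_two] using hY.integrable_abs_rpow (r := 2) (by norm_num) hp
  have iY1 : Integrable Y μ := hY.integrable (by simp; linarith)
  have hφ : Measurable fun x : ℝ => |x| ^ (p - 2) * x := by fun_prop
  have iSX : Integrable (fun ω => |X ω| ^ (p - 2) * X ω) μ := by
    refine (hX.integrable_abs_rpow (r := p - 1) (by linarith) (by linarith)).congr'
      (hφ.comp_aemeasurable hX.1.aemeasurable).aestronglyMeasurable (ae_of_all _ fun ω => ?_)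
    have h0 := abs_nonneg (X ω)
    rw [Real.norm_eq_abs, Real.norm_eq_abs, abs_mul, abs_of_nonneg (Real.rpow_nonneg h0 _),
      abs_of_nonneg (Real.rpow_nonneg h0 _), ← Real.rpow_add_one' h0 (by linarith)]
    ring_nf
  have hind1 : IndepFun (fun ω => |X ω| ^ (p - 2) * X ω) Y μ := hXY.comp hφ measurable_id
  have hind2 : IndepFun (fun ω => |X ω| ^ (p - 2)) (fun ω => Y ω ^ 2) μ :=
    hXY.comp (φ := fun x => |x| ^ (p - 2)) (ψ := fun y => y ^ 2) (by fun_prop) (by fun_prop)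
  have E1 : ∫ ω, |X ω| ^ (p - 2) * X ω * Y ω ∂μ = 0 := by
    rw [hind1.integral_fun_mul_eq_mul_integral iSX.1 iY1.1, hY0, mul_zero]
  have E2 := hind2.integral_fun_mul_eq_mul_integral iX2.1 iY2.1
  have i1 : Integrable (fun ω => |X ω| ^ (p - 2) * X ω * Y ω) μ := hind1.integrable_mul iSX iY1
  have i2 : Integrable (fun ω => |X ω| ^ (p - 2) * Y ω ^ 2) μ := hind2.integrable_mul iX2 iY2
  calc ∫ ω, |X ω + Y ω| ^ p ∂μ
      ≤ ∫ ω, |X ω| ^ p + p * (|X ω| ^ (p - 2) * X ω * Y ω)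
          + 2 * (p + 1) ^ p * (|X ω| ^ (p - 2) * Y ω ^ 2 + |Y ω| ^ p) ∂μ :=
        integral_mono iXY ((iX.add (i1.const_mul p)).add ((i2.add iY).const_mul _))
          fun ω => (Real.abs_add_rpow_le hp _ _).trans_eq (by ring)
    _ = _ := by
        rw [integral_add, integral_add, integral_const_mul, integral_const_mul,
          integral_add, E1, E2]
        · ring
        exacts [i2, iY, iX, i1.const_mul p, iX.add (i1.const_mul p), (i2.add iY).const_mul _]

lemma lpNorm_add_rpow_le [IsProbabilityMeasure μ] (hp : 2 ≤ p) {X Y : Ω → ℝ}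
    (hXY : IndepFun X Y μ) (hY0 : μ[Y] = 0)
    (hX : MemLp X (ENNReal.ofReal p) μ) (hY : MemLp Y (ENNReal.ofReal p) μ) :
    lpNorm (X + Y) (ENNReal.ofReal p) μ ^ p ≤ lpNorm X (ENNReal.ofReal p) μ ^ p
      + 2 * (p + 1) ^ p * (lpNorm X (ENNReal.ofReal p) μ ^ (p - 2)
        * lpNorm Y (ENNReal.ofReal p) μ ^ 2 + lpNorm Y (ENNReal.ofReal p) μ ^ p) := by
  have hp0 : 0 < p := by linarith
  have hX2 := integral_abs_rpow_le_lpNorm_rpow hX (r := p - 2) (by linarith) (by linarith)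
  have hY2 : ∫ ω, Y ω ^ 2 ∂μ ≤ lpNorm Y (ENNReal.ofReal p) μ ^ 2 := by
    simpa [Real.rpow_two] using integral_abs_rpow_le_lpNorm_rpow hY (r := 2) (by norm_num) hp
  rw [← integral_abs_rpow_eq_lpNorm_rpow hp0 hX.1, ← integral_abs_rpow_eq_lpNorm_rpow hp0 hY.1,
    ← integral_abs_rpow_eq_lpNorm_rpow hp0 (hX.1.add hY.1)]
  refine (integral_abs_add_rpow_le hp hXY hY0 hX hY).trans ?_
  gcongr
  exact Real.rpow_nonneg lpNorm_nonneg _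

theorem lpNorm_finsetSum_sq_le [IsProbabilityMeasure μ] (hp : 2 ≤ p) {ι : Type*}
    {f : ι → Ω → ℝ} (hind : iIndepFun f μ) (hmean : ∀ i, μ[f i] = 0)
    (hmem : ∀ i, MemLp (f i) (ENNReal.ofReal p) μ) (s : Finset ι) :
    lpNorm (∑ i ∈ s, f i) (ENNReal.ofReal p) μ ^ 2
      ≤ 4 * (p + 1) ^ p * ∑ i ∈ s, lpNorm (f i) (ENNReal.ofReal p) μ ^ 2 := by
  induction s using Finset.cons_induction with
  | empty => simp
  | cons j s hj ih =>
    have hstep := lpNorm_add_rpow_le hp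
      (hind.indepFun_finsetSum_of_notMem₀ (fun i => (hmem i).1.aemeasurable) hj) (hmean j)
      (memLp_finsetSum' s fun i _ => hmem i) (hmem j)
    have hnum := Real.rpow_add_mul_le (q := p / 2) (c := 2 * (p + 1) ^ p) (by linarith)
      (by nlinarith [Real.one_le_rpow (by linarith : (1 : ℝ) ≤ p + 1) (by linarith : 0 ≤ p)])
      (sq_nonneg _) (sq_nonneg (lpNorm (f j) (ENNReal.ofReal p) μ)) ih
    rw [Real.sq_rpow_div_two lpNorm_nonneg, show p / 2 - 1 = (p - 2) / 2 by ring,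
      Real.sq_rpow_div_two lpNorm_nonneg, Real.sq_rpow_div_two lpNorm_nonneg] at hnum
    rw [Finset.sum_cons, Finset.sum_cons, add_comm (f j),
      ← Real.rpow_le_rpow_iff (z := p / 2) (sq_nonneg _) (by positivity) (by linarith),
      Real.sq_rpow_div_two lpNorm_nonneg]
    refine hstep.trans (hnum.trans_eq ?_)
    congr 1
    ring

end

/-- **Type-2 inequality for independent mean-zero random variables.** For every real
`2 ≤ p < ∞` there is `D_p > 0` such that for every probability space `(Ω, μ)`, every
finite sequence `f₁, …, f_n` of independent mean-zero random variables in `L^p(μ)`, and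
all real scalars `a₁, …, a_n`,
`‖∑ aₖ fₖ‖_{L^p(μ)} ≤ D_p (∑ aₖ² ‖fₖ‖_{L^p(μ)}²)^{1/2}`. -/
theorem type_two_for_independent_mean_zero (p : ℝ) (hp : 2 ≤ p) :
    ∃ D : ℝ, 0 < D ∧
      ∀ (Ω : Type) [MeasurableSpace Ω] (μ : Measure Ω) [IsProbabilityMeasure μ]
        (n : ℕ) (f : Fin n → Ω → ℝ),
        iIndepFun f μ →
        (∀ k, Measurable (f k)) →
        (∀ k, ∫ ω, f k ω ∂μ = 0) →
        (∀ k, MemLp (f k) (ENNReal.ofReal p) μ) →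
        ∀ a : Fin n → ℝ,
          (eLpNorm (fun ω => ∑ k, a k * f k ω) (ENNReal.ofReal p) μ).toReal ≤
            D * Real.sqrt (∑ k, a k ^ 2 *
              ((eLpNorm (f k) (ENNReal.ofReal p) μ).toReal) ^ 2) := by
  refine ⟨Real.sqrt (4 * (p + 1) ^ p), by positivity, ?_⟩
  intro Ω _ μ _ n f hind _ hmean hmem a
  set g : Fin n → Ω → ℝ := fun k => a k • f k
  have hsum := lpNorm_finsetSum_sq_le (f := g) hp
    (hind.comp (fun k x => a k * x) fun k => by fun_prop)
    (fun k => by simp [g, integral_const_mul, hmean k]) (fun k => (hmem k).const_smul (a k))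
    Finset.univ
  have hg : ∀ k, lpNorm (g k) (ENNReal.ofReal p) μ ^ 2
      = a k ^ 2 * (eLpNorm (f k) (ENNReal.ofReal p) μ).toReal ^ 2 := fun k => by
    rw [lpNorm_const_smul, toReal_eLpNorm (hmem k).1]; simp [mul_pow]
  have hfun : (fun ω => ∑ k, a k * f k ω) = ∑ k, g k := by ext; simp [g]
  rw [Finset.sum_congr rfl fun k _ => hg k] at hsum
  rw [hfun, toReal_eLpNorm
      (Finset.aestronglyMeasurable_sum _ fun k _ => (hmem k).1.const_smul (a k)),
    ← Real.sqrt_mul (by positivity)]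
  exact Real.le_sqrt_of_sq_le hsum
end
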